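/- arXiv:1806.06031 — 2 statements merged into one kernel-verified Lean document; each statement's English description precedes it below -/
import Mathlib

section
/- Let G be a group generated by a finite set X and let H be a K-quasiconvex subgroup of G (every geodesic in the Cayley graph of G with endpoints in H stays in the K-neighborhood of H). Then H is generated by the set of elements of H representable by words over X of length at most 2K+1. -/
/-- Evaluate a word over `X ∪ X⁻¹` (letters indexed by `Fin k`, with a sign bit)
in the group `G`, where `ρ : Fin k → G` lists the generators. -/
def evalWord {G : Type*} [Group G] {k : ℕ} (ρ : Fin k → G)
    (w : List (Fin k × Bool)) : G :=
  (w.map fun p => if p.2 then ρ p.1 else (ρ p.1)⁻¹).prod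

/-- Word length of `g` with respect to the generating set `ρ`. -/
noncomputable def wl {G : Type*} [Group G] {k : ℕ} (ρ : Fin k → G) (g : G) : ℕ :=
  sInf {n | ∃ w : List (Fin k × Bool), evalWord ρ w = g ∧ w.length = n}

/-- `ρ` is a generating set of `G`. -/
def Generates {G : Type*} [Group G] {k : ℕ} (ρ : Fin k → G) : Prop :=
  Subgroup.closure (Set.range ρ) = ⊤

/-- `w` is the label of a geodesic in the Cayley graph from `a` to `b`. -/
def IsGeodesicWord {G : Type*} [Group G] {k : ℕ} (ρ : Fin k → G)
    (a b : G) (w : List (Fin k × Bool)) : Prop :=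
  evalWord ρ w = a⁻¹ * b ∧ w.length = wl ρ (a⁻¹ * b)

/-- `v` is a vertex on the path starting at `a` labeled by `w`. -/
def VertexOn {G : Type*} [Group G] {k : ℕ} (ρ : Fin k → G)
    (a : G) (w : List (Fin k × Bool)) (v : G) : Prop :=
  ∃ i ≤ w.length, v = a * evalWord ρ (w.take i)

/-- `H` is `K`-quasiconvex: every vertex on a geodesic with endpoints in `H`
is within distance `K` of `H`. -/
def IsQuasiconvex {G : Type*} [Group G] {k : ℕ} (ρ : Fin k → G)
    (H : Subgroup G) (K : ℕ) : Prop :=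
  ∀ a ∈ H, ∀ b ∈ H, ∀ w, IsGeodesicWord ρ a b w →
    ∀ v, VertexOn ρ a w v → ∃ h ∈ H, wl ρ (v⁻¹ * h) ≤ K

/-- `G` is `δ`-hyperbolic: geodesic triangles are `δ`-thin. -/
def IsHyperbolic {G : Type*} [Group G] {k : ℕ} (ρ : Fin k → G) (δ : ℕ) : Prop :=
  ∀ a b c : G, ∀ wab wbc wac,
    IsGeodesicWord ρ a b wab → IsGeodesicWord ρ b c wbc → IsGeodesicWord ρ a c wac →
    ∀ v, VertexOn ρ a wab v →
      ∃ u, (VertexOn ρ b wbc u ∨ VertexOn ρ a wac u) ∧ wl ρ (v⁻¹ * u) ≤ δ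

/-- The conjugate subgroup `g⁻¹ H g`. -/
def conjSub {G : Type*} [Group G] (g : G) (H : Subgroup G) : Subgroup G :=
  Subgroup.map (MulAut.conj g⁻¹).toMonoidHom H

/-!
Follow a geodesic word for `h ∈ H` from `1` to `h` and, by quasiconvexity, pick for each of its
vertices `vᵢ` an element `fᵢ ∈ H` at distance at most `K`. Consecutive vertices are at distance `1`,
so consecutive `fᵢ` are at distance at most `2K + 1`, and `h` is the telescoping product
`f₀ · (f₀⁻¹ f₁) ⋯ (fₙ₋₁⁻¹ fₙ) · (fₙ⁻¹ h)` of elements of `H` of length at most `2K + 1`.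
-/

section WordLength

variable {G : Type*} [Group G] {k : ℕ} (ρ : Fin k → G)

@[simp]
lemma evalWord_nil : evalWord ρ [] = 1 := rfl

@[simp]
lemma evalWord_append (w₁ w₂ : List (Fin k × Bool)) :
    evalWord ρ (w₁ ++ w₂) = evalWord ρ w₁ * evalWord ρ w₂ := by
  simp [evalWord]

def invWord (w : List (Fin k × Bool)) : List (Fin k × Bool) :=
  w.reverse.map fun p => (p.1, !p.2)

@[simp]
lemma length_invWord (w : List (Fin k × Bool)) : (invWord w).length = w.length := by
  simp [invWord]

@[simp]
lemma evalWord_invWord (w : List (Fin k × Bool)) :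
    evalWord ρ (invWord w) = (evalWord ρ w)⁻¹ := by
  induction w with
  | nil => simp [invWord]
  | cons a t ih =>
    obtain ⟨i, _ | _⟩ := a <;> simp_all [invWord, evalWord]

variable {ρ}

lemma exists_evalWord_eq (hgen : Generates ρ) (g : G) :
    ∃ w : List (Fin k × Bool), evalWord ρ w = g := by
  have hg : g ∈ Subgroup.closure (Set.range ρ) := hgen ▸ Subgroup.mem_top g
  induction hg using Subgroup.closure_induction with
  | mem x hx =>
    obtain ⟨i, rfl⟩ := hx
    exact ⟨[(i, true)], by simp [evalWord]⟩
  | one => exact ⟨[], rfl⟩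
  | mul x y _ _ hx hy =>
    obtain ⟨w₁, rfl⟩ := hx
    obtain ⟨w₂, rfl⟩ := hy
    exact ⟨w₁ ++ w₂, evalWord_append ρ w₁ w₂⟩
  | inv x _ hx =>
    obtain ⟨w, rfl⟩ := hx
    exact ⟨invWord w, evalWord_invWord ρ w⟩

lemma exists_evalWord_eq_length_eq_wl (hgen : Generates ρ) (g : G) :
    ∃ w : List (Fin k × Bool), evalWord ρ w = g ∧ w.length = wl ρ g := by
  obtain ⟨w, hw⟩ := exists_evalWord_eq hgen g
  exact Nat.sInf_mem (s := {n | ∃ w, evalWord ρ w = g ∧ w.length = n}) ⟨w.length, w, hw, rfl⟩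

lemma wl_le_length {w : List (Fin k × Bool)} {g : G} (hw : evalWord ρ w = g) :
    wl ρ g ≤ w.length :=
  Nat.sInf_le ⟨w, hw, rfl⟩

@[simp]
lemma wl_one : wl ρ (1 : G) = 0 :=
  Nat.le_zero.mp (wl_le_length (w := []) rfl)

lemma wl_mul_le (hgen : Generates ρ) (a b : G) : wl ρ (a * b) ≤ wl ρ a + wl ρ b := by
  obtain ⟨w₁, rfl, hl₁⟩ := exists_evalWord_eq_length_eq_wl hgen a
  obtain ⟨w₂, rfl, hl₂⟩ := exists_evalWord_eq_length_eq_wl hgen b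
  simpa [← hl₁, ← hl₂] using wl_le_length (evalWord_append ρ w₁ w₂)

lemma wl_inv_le (hgen : Generates ρ) (a : G) : wl ρ a⁻¹ ≤ wl ρ a := by
  obtain ⟨w, rfl, hl⟩ := exists_evalWord_eq_length_eq_wl hgen a
  simpa [← hl] using wl_le_length (evalWord_invWord ρ w)

lemma wl_inv_mul_le_of_close (hgen : Generates ρ) {v v' f f' : G} {K L : ℕ}
    (hf : wl ρ (v⁻¹ * f) ≤ K) (hv : wl ρ (v⁻¹ * v') ≤ L) (hf' : wl ρ (v'⁻¹ * f') ≤ K) :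
    wl ρ (f⁻¹ * f') ≤ 2 * K + L := by
  have hsplit : f⁻¹ * f' = (v⁻¹ * f)⁻¹ * (v⁻¹ * v') * (v'⁻¹ * f') := by group
  calc wl ρ (f⁻¹ * f')
      ≤ wl ρ (v⁻¹ * f)⁻¹ + wl ρ (v⁻¹ * v') + wl ρ (v'⁻¹ * f') := by
        rw [hsplit]
        exact (wl_mul_le hgen _ _).trans (Nat.add_le_add_right (wl_mul_le hgen _ _) _)
    _ ≤ 2 * K + L := by have := wl_inv_le hgen (v⁻¹ * f); omega

lemma wl_inv_mul_evalWord_take_succ_le (w : List (Fin k × Bool)) (i : ℕ) :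
    wl ρ ((evalWord ρ (w.take i))⁻¹ * evalWord ρ (w.take (i + 1))) ≤ 1 := by
  rw [List.take_add_one, evalWord_append, inv_mul_cancel_left]
  exact (wl_le_length rfl).trans (by cases w[i]? <;> simp)

lemma vertexOn_take (a : G) (w : List (Fin k × Bool)) (i : ℕ) :
    VertexOn ρ a w (a * evalWord ρ (w.take i)) :=
  ⟨min i w.length, min_le_right _ _, by rw [← List.take_eq_take_min]⟩

end WordLength

lemma Subgroup.inv_mul_mem_closure_of_forall_inv_mul_succ_mem {G : Type*} [Group G]
    {S : Set G} (f : ℕ → G) (n : ℕ) (hS : ∀ i < n, (f i)⁻¹ * f (i + 1) ∈ S) :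
    (f 0)⁻¹ * f n ∈ Subgroup.closure S := by
  induction n with
  | zero => simp
  | succ n ih =>
    have hsplit : (f 0)⁻¹ * f (n + 1) = ((f 0)⁻¹ * f n) * ((f n)⁻¹ * f (n + 1)) := by group
    rw [hsplit]
    exact Subgroup.mul_mem _ (ih fun i hi => hS i (by omega))
      (Subgroup.subset_closure (hS n n.lt_succ_self))

/-- A `K`-quasiconvex subgroup of a group with finite generating set `ρ` is
generated by its elements of word length at most `2K+1`. -/
theorem quasiconvex_generated_by_short_elements
    {G : Type*} [Group G] {k : ℕ} (ρ : Fin k → G) (hgen : Generates ρ)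
    (H : Subgroup G) (K : ℕ) (hqc : IsQuasiconvex ρ H K) :
    Subgroup.closure {h : G | h ∈ H ∧ wl ρ h ≤ 2 * K + 1} = H := by
  set S := {h : G | h ∈ H ∧ wl ρ h ≤ 2 * K + 1}
  refine le_antisymm ((Subgroup.closure_le H).mpr fun _ hs => hs.1) fun h hh => ?_
  obtain ⟨w, hw, hlen⟩ := exists_evalWord_eq_length_eq_wl hgen h
  set v : ℕ → G := fun i => evalWord ρ (w.take i)
  have hnear (i : ℕ) : ∃ f ∈ H, wl ρ ((v i)⁻¹ * f) ≤ K := by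
    simpa using hqc 1 H.one_mem h hh w ⟨by simpa, by simpa⟩ _ (vertexOn_take 1 w i)
  choose f hfH hfK using hnear
  have hvn : v w.length = h := by simp [v, hw]
  have hS {x : G} (hx : x ∈ H) (hxK : wl ρ x ≤ K) : x ∈ Subgroup.closure S :=
    Subgroup.subset_closure ⟨hx, by omega⟩
  have hchain : (f 0)⁻¹ * f w.length ∈ Subgroup.closure S :=
    Subgroup.inv_mul_mem_closure_of_forall_inv_mul_succ_mem f _ fun i _ =>
      ⟨H.mul_mem (H.inv_mem (hfH i)) (hfH (i + 1)),
        wl_inv_mul_le_of_close hgen (hfK i) (wl_inv_mul_evalWord_take_succ_le w i) (hfK (i + 1))⟩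
  have hstart : f 0 ∈ Subgroup.closure S := hS (hfH 0) (by simpa [v] using hfK 0)
  have hend : (f w.length)⁻¹ * h ∈ Subgroup.closure S := by
    refine hS (H.mul_mem (H.inv_mem (hfH _)) hh) ?_
    simpa [hvn] using (wl_inv_le hgen _).trans (hfK w.length)
  simpa using Subgroup.mul_mem _ (Subgroup.mul_mem _ hstart hchain) hend
end

section
/- Dehn's algorithm is correct: for a group G with Dehn presentation ⟨X | R⟩, a freely reduced word w represents the identity of G if and only if the iterative process of replacing a subword v (an initial segment of a relator r = vu with |v| > |r|/2) by u⁻¹ and freely reducing eventually terminates with the empty word. -/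
/-- A word over `X ∪ X⁻¹`, letters indexed by `Fin k` with a sign bit. -/
abbrev Word (k : ℕ) := List (Fin k × Bool)

/-- The formal inverse of a word. -/
def wInv {k : ℕ} (w : Word k) : Word k := (w.map fun p => (p.1, !p.2)).reverse

/-- The element of the free group represented by a word. -/
def toF {k : ℕ} (w : Word k) : FreeGroup (Fin k) := FreeGroup.mk w

/-- A word is freely reduced. -/
def Reduced {k : ℕ} (w : Word k) : Prop := FreeGroup.reduce w = w

/-- One step of Dehn's algorithm: find a subword `v` of `w` which is an initial
segment of a relator `r = v ++ u` with `|v| > |r|/2`, replace it by `u⁻¹` and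
freely reduce. -/
def DehnStep {k : ℕ} (R : Finset (Word k)) (w w' : Word k) : Prop :=
  ∃ r ∈ R, ∃ v u p q : Word k, r = v ++ u ∧ r.length < 2 * v.length ∧
    w = p ++ v ++ q ∧ w' = FreeGroup.reduce (p ++ wInv u ++ q)

/-- The relators of the presentation, as a subset of the free group. -/
def rels {k : ℕ} (R : Finset (Word k)) : Set (FreeGroup (Fin k)) :=
  {x | ∃ r ∈ R, x = toF r}

/-- `w` represents the identity of the presented group `⟨Fin k | R⟩`. -/
def RepsId {k : ℕ} (R : Finset (Word k)) (w : Word k) : Prop :=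
  toF w ∈ Subgroup.normalClosure (rels R)

/-- `⟨Fin k | R⟩` is a Dehn presentation: every nonempty freely reduced word
representing the identity contains a subword `v` which is an initial segment of some
relator `r = v ++ u` with `|v| > |r|/2`. -/
def IsDehnPresentation {k : ℕ} (R : Finset (Word k)) : Prop :=
  ∀ w : Word k, Reduced w → w ≠ [] → RepsId R w →
    ∃ r ∈ R, ∃ v u : Word k, r = v ++ u ∧ r.length < 2 * v.length ∧ v <:+: w

lemma toF_append {k : ℕ} (a b : Word k) : toF (a ++ b) = toF a * toF b := by
  simp [toF, FreeGroup.mul_mk]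

lemma toF_wInv {k : ℕ} (a : Word k) : toF (wInv a) = (toF a)⁻¹ := by
  simp [toF, wInv, FreeGroup.inv_mk, FreeGroup.invRev]

lemma toF_reduce {k : ℕ} (a : Word k) : toF (FreeGroup.reduce a) = toF a :=
  FreeGroup.reduce.self

lemma dehnStep_repsId_iff {k : ℕ} (R : Finset (Word k)) {w w' : Word k}
    (h : DehnStep R w w') : RepsId R w ↔ RepsId R w' := by
  obtain ⟨r, hr, v, u, p, q, hru, hlen, hw, hw'⟩ := h
  have hc : toF r ∈ Subgroup.normalClosure (rels R) :=
    Subgroup.subset_normalClosure ⟨r, hr, rfl⟩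
  have hconj : toF p * toF r * (toF p)⁻¹ ∈ Subgroup.normalClosure (rels R) :=
    Subgroup.normalClosure_normal.conj_mem _ hc _
  have key : toF w = (toF p * toF r * (toF p)⁻¹) * toF w' := by
    subst hw hw'
    rw [toF_reduce, hru]
    simp only [toF_append, toF_wInv]
    group
  constructor
  · intro hrw
    have : toF w' = (toF p * toF r * (toF p)⁻¹)⁻¹ * toF w := by
      rw [key]; group
    rw [RepsId, this]
    exact mul_mem (inv_mem hconj) hrw
  · intro hrw'
    rw [RepsId, key]
    exact mul_mem hconj hrw'

lemma reduced_reduce {k : ℕ} (a : Word k) : Reduced (FreeGroup.reduce a) :=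
  FreeGroup.reduce.idem

lemma forward_aux {k : ℕ} (R : Finset (Word k)) (hdehn : IsDehnPresentation R) :
    ∀ n : ℕ, ∀ w : Word k, w.length ≤ n → Reduced w → RepsId R w →
      Relation.ReflTransGen (DehnStep R) w [] := by
  intro n
  induction n with
  | zero =>
    intro w hl _ _
    have : w = [] := List.eq_nil_of_length_eq_zero (Nat.le_zero.mp hl)
    subst this; exact Relation.ReflTransGen.refl
  | succ n ih =>
    intro w hl hred hrw
    by_cases hw : w = []
    · subst hw; exact Relation.ReflTransGen.refl
    · obtain ⟨r, hr, v, u, hru, hlen, hsub⟩ := hdehn w hred hw hrw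
      obtain ⟨p, q, hpq⟩ := hsub
      set w' := FreeGroup.reduce (p ++ wInv u ++ q) with hw'
      have hstep : DehnStep R w w' := ⟨r, hr, v, u, p, q, hru, hlen, hpq.symm, rfl⟩
      have hrw' : RepsId R w' := (dehnStep_repsId_iff R hstep).mp hrw
      have hulen : u.length < v.length := by
        have : r.length = v.length + u.length := by rw [hru]; simp
        omega
      have hlt : w'.length < w.length := by
        have h1 : w'.length ≤ (p ++ wInv u ++ q).length :=
          FreeGroup.reduce.red.length_le
        have h2 : (wInv u).length = u.length := by simp [wInv]
        have h3 : w.length = p.length + v.length + q.length := by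
          rw [← hpq]; simp; omega
        simp only [List.length_append, h2] at h1
        omega
      exact Relation.ReflTransGen.head hstep
        (ih w' (by omega) (reduced_reduce _) hrw')

/-- Correctness of Dehn's algorithm: a freely reduced word represents the identity
of a group with a Dehn presentation iff iterated Dehn steps reach the empty word. -/
theorem dehn_algorithm_correct {k : ℕ} (R : Finset (Word k))
    (hdehn : IsDehnPresentation R) :
    ∀ w : Word k, Reduced w →
      (RepsId R w ↔ Relation.ReflTransGen (DehnStep R) w []) := by
  intro w hred
  constructor
  · intro hrw
    exact forward_aux R hdehn w.length w le_rfl hred hrw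
  · intro h
    clear hred
    induction h using Relation.ReflTransGen.head_induction_on with
    | refl =>
      show FreeGroup.mk [] ∈ _
      rw [← FreeGroup.one_eq_mk]
      exact one_mem _
    | head hstep _ ihp => exact (dehnStep_repsId_iff R hstep).mpr ihp
end
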